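/- arXiv:1410.2961 — 2 statements merged into one kernel-verified Lean document; each statement's English description precedes it below -/
import Mathlib

section
/- Let 𝒜 = {(δ₀,δ₁) ∈ [0,1]² : 0 < δ₀ < δ₁ < 1} ∪ {(δ₀,δ₁) : 0 < δ₀ = δ₁ < 1} ∪ {(0,1)}. Then a decision δ ∈ [0,1]² is admissible if and only if δ ∈ 𝒜; moreover 𝒜 is a complete class, i.e. for every δ ∈ [0,1]² \ 𝒜 there exists δ' ∈ 𝒜 that dominates δ. Hence 𝒜 is the minimal complete class. -/
open scoped ENNReal

/-- The Kullback–Leibler loss `L(θ,d) = θ·log(θ/d) + (1−θ)·log((1−θ)/(1−d)) ∈ [0,∞]`,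
with the conventions `0 · log(0/c) = 0` and `c · log(c/0) = +∞` for `c > 0`.
(When `θ = 0` or `θ = 1`, the corresponding vanishing term is `0` automatically
since `Real.log 0 = 0` in Lean.) -/
noncomputable def KLoss (θ d : ℝ) : ℝ≥0∞ :=
  if (θ ≠ 0 ∧ d = 0) ∨ (θ ≠ 1 ∧ d = 1) then ⊤
  else ENNReal.ofReal
    (θ * Real.log (θ / d) + (1 - θ) * Real.log ((1 - θ) / (1 - d)))

/-- The risk function `R_δ(θ) = (1−θ)·L(θ,δ₀) + θ·L(θ,δ₁) ∈ [0,∞]`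
of a decision `δ = (δ₀, δ₁)`. -/
noncomputable def risk (δ : ℝ × ℝ) (θ : ℝ) : ℝ≥0∞ :=
  ENNReal.ofReal (1 - θ) * KLoss θ δ.1 + ENNReal.ofReal θ * KLoss θ δ.2

/-- `δ'` dominates `δ`: `R_{δ'} ≤ R_δ` on `[0,1]`, with strict inequality somewhere. -/
def Dominates (δ' δ : ℝ × ℝ) : Prop :=
  (∀ θ ∈ Set.Icc (0 : ℝ) 1, risk δ' θ ≤ risk δ θ) ∧
  (∃ θ ∈ Set.Icc (0 : ℝ) 1, risk δ' θ < risk δ θ)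


/-- The set of all decisions: the unit square `[0,1]²`. -/
def Decisions : Set (ℝ × ℝ) := Set.Icc (0 : ℝ) 1 ×ˢ Set.Icc (0 : ℝ) 1

/-- A decision is admissible if no decision in `[0,1]²` dominates it. -/
def Admissible (δ : ℝ × ℝ) : Prop := ∀ δ' ∈ Decisions, ¬ Dominates δ' δ

/-- A class of decisions is complete if every decision outside it is dominated by
some decision in it. -/
def CompleteClass (C : Set (ℝ × ℝ)) : Prop :=
  C ⊆ Decisions ∧ ∀ δ ∈ Decisions \ C, ∃ δ' ∈ C, Dominates δ' δ

/-- The class `𝒜 = 𝒞_< ∪ 𝒞_= ∪ {(0,1)}`. -/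
def classA : Set (ℝ × ℝ) :=
  {δ : ℝ × ℝ | 0 < δ.1 ∧ δ.1 < δ.2 ∧ δ.2 < 1} ∪
    {δ : ℝ × ℝ | 0 < δ.1 ∧ δ.1 = δ.2 ∧ δ.2 < 1} ∪ {((0 : ℝ), (1 : ℝ))}

/-!
Every decision with a coordinate in `{0, 1}` has infinite risk on `(0, 1)`, while `(0, 1)` has
risk `0` at both endpoints, so `(0, 1)` dominates all of them except itself. An interior decision
`(x, y)` with `y < x` is dominated by the constant decision `(m, m)`, `m = x / (1 + x - y)`, by the
tangent-line bound `log t ≥ 1 - 1 / t`. The remaining interior decisions are unique Bayes rules,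
hence admissible: `(m, m)` for the point mass at `m`, and `(x, y)` with `x < y` for a prior
supported on `{0, y}`.
-/

open Real Set InformationTheory

lemma admissible_of_forall_risk_le_imp_eq {δ : ℝ × ℝ}
    (h : ∀ δ' ∈ Decisions, (∀ θ ∈ Icc (0 : ℝ) 1, risk δ' θ ≤ risk δ θ) → δ' = δ) :
    Admissible δ := by
  rintro δ' hδ' ⟨hle, θ, -, hlt⟩
  rw [h δ' hδ' hle] at hlt
  exact lt_irrefl _ hlt

lemma CompleteClass.mem_of_admissible {C : Set (ℝ × ℝ)} (hC : CompleteClass C) {δ : ℝ × ℝ}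
    (hδ : δ ∈ Decisions) (hadm : Admissible δ) : δ ∈ C := by
  by_contra hnot
  obtain ⟨δ', hδ'C, hdom⟩ := hC.2 δ ⟨hδ, hnot⟩
  exact hadm δ' (hC.1 hδ'C) hdom

lemma not_completeClass_of_ssubset {C D : Set (ℝ × ℝ)} (hC : C ⊆ Decisions)
    (hadm : ∀ δ ∈ C, Admissible δ) (hDC : D ⊂ C) : ¬ CompleteClass D := by
  intro hD
  obtain ⟨δ, hδC, hδD⟩ := exists_of_ssubset hDC
  exact hδD (hD.mem_of_admissible (hC hδC) (hadm δ hδC))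

noncomputable def binaryKL (θ d : ℝ) : ℝ :=
  θ * log (θ / d) + (1 - θ) * log ((1 - θ) / (1 - d))

lemma mul_log_div_eq_sub {w z : ℝ} (hz : z ≠ 0) : w * log (w / z) = w * log w - w * log z := by
  rcases eq_or_ne w 0 with rfl | hw
  · simp
  · rw [log_div hw hz]; ring

lemma binaryKL_eq {θ d : ℝ} (hd : d ∈ Ioo (0 : ℝ) 1) :
    binaryKL θ d = θ * log θ + (1 - θ) * log (1 - θ) - θ * log d - (1 - θ) * log (1 - d) := by
  rw [binaryKL, mul_log_div_eq_sub hd.1.ne', mul_log_div_eq_sub (sub_ne_zero.2 hd.2.ne')]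
  ring

lemma binaryKL_eq_klFun {θ d : ℝ} (hd : d ∈ Ioo (0 : ℝ) 1) :
    binaryKL θ d = d * klFun (θ / d) + (1 - d) * klFun ((1 - θ) / (1 - d)) := by
  have hd₀ : d ≠ 0 := hd.1.ne'
  have hd₁ : 1 - d ≠ 0 := sub_ne_zero.2 hd.2.ne'
  simp only [binaryKL, klFun, mul_add, mul_sub, ← mul_assoc, mul_div_cancel₀ _ hd₀,
    mul_div_cancel₀ _ hd₁]
  ring

lemma binaryKL_nonneg {θ d : ℝ} (hθ : θ ∈ Icc (0 : ℝ) 1) (hd : d ∈ Ioo (0 : ℝ) 1) :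
    0 ≤ binaryKL θ d := by
  have hd₁ : 0 < 1 - d := sub_pos.2 hd.2
  rw [binaryKL_eq_klFun hd]
  exact add_nonneg (mul_nonneg hd.1.le (klFun_nonneg (div_nonneg hθ.1 hd.1.le)))
    (mul_nonneg hd₁.le (klFun_nonneg (div_nonneg (sub_nonneg.2 hθ.2) hd₁.le)))

lemma binaryKL_eq_zero_iff {θ d : ℝ} (hθ : θ ∈ Icc (0 : ℝ) 1) (hd : d ∈ Ioo (0 : ℝ) 1) :
    binaryKL θ d = 0 ↔ d = θ := by
  have hd₁ : 0 < 1 - d := sub_pos.2 hd.2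
  rw [binaryKL_eq_klFun hd, add_eq_zero_iff_of_nonneg
    (mul_nonneg hd.1.le (klFun_nonneg (div_nonneg hθ.1 hd.1.le)))
    (mul_nonneg hd₁.le (klFun_nonneg (div_nonneg (sub_nonneg.2 hθ.2) hd₁.le))),
    mul_eq_zero_iff_left hd.1.ne', mul_eq_zero_iff_left hd₁.ne',
    klFun_eq_zero_iff (div_nonneg hθ.1 hd.1.le),
    klFun_eq_zero_iff (div_nonneg (sub_nonneg.2 hθ.2) hd₁.le),
    div_eq_one_iff_eq hd.1.ne', div_eq_one_iff_eq hd₁.ne']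
  constructor
  · exact fun h => h.1.symm
  · rintro rfl; exact ⟨rfl, rfl⟩

lemma KLoss_eq_ofReal {θ d : ℝ} (hd : d ∈ Ioo (0 : ℝ) 1) :
    KLoss θ d = ENNReal.ofReal (binaryKL θ d) :=
  if_neg (by rintro (⟨-, rfl⟩ | ⟨-, rfl⟩) <;> simp at hd)

lemma KLoss_eq_top {θ d : ℝ} (hθ : θ ∈ Ioo (0 : ℝ) 1) (hd : d = 0 ∨ d = 1) : KLoss θ d = ⊤ :=
  if_pos (hd.imp (⟨hθ.1.ne', ·⟩) (⟨hθ.2.ne, ·⟩))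

lemma KLoss_eq_zero_iff {θ d : ℝ} (hθ : θ ∈ Icc (0 : ℝ) 1) (hd : d ∈ Icc (0 : ℝ) 1) :
    KLoss θ d = 0 ↔ d = θ := by
  rcases eq_endpoints_or_mem_Ioo_of_mem_Icc hd with rfl | rfl | hd
  · by_cases hθ₀ : θ = 0 <;> simp [KLoss, hθ₀, eq_comm]
  · by_cases hθ₁ : θ = 1 <;> simp [KLoss, hθ₁, eq_comm]
  · rw [KLoss_eq_ofReal hd, ENNReal.ofReal_eq_zero, ← binaryKL_eq_zero_iff hθ hd]
    exact ⟨fun h => h.antisymm (binaryKL_nonneg hθ hd), le_of_eq⟩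

lemma risk_zero (δ : ℝ × ℝ) : risk δ 0 = KLoss 0 δ.1 := by simp [risk]

lemma risk_one (δ : ℝ × ℝ) : risk δ 1 = KLoss 1 δ.2 := by simp [risk]

noncomputable def riskReal (δ : ℝ × ℝ) (θ : ℝ) : ℝ :=
  (1 - θ) * binaryKL θ δ.1 + θ * binaryKL θ δ.2

lemma riskReal_nonneg {δ : ℝ × ℝ} (hδ : δ ∈ Ioo (0 : ℝ) 1 ×ˢ Ioo (0 : ℝ) 1) {θ : ℝ}
    (hθ : θ ∈ Icc (0 : ℝ) 1) : 0 ≤ riskReal δ θ :=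
  add_nonneg (mul_nonneg (sub_nonneg.2 hθ.2) (binaryKL_nonneg hθ hδ.1))
    (mul_nonneg hθ.1 (binaryKL_nonneg hθ hδ.2))

lemma risk_eq_ofReal {δ : ℝ × ℝ} (hδ : δ ∈ Ioo (0 : ℝ) 1 ×ˢ Ioo (0 : ℝ) 1) {θ : ℝ}
    (hθ : θ ∈ Icc (0 : ℝ) 1) : risk δ θ = ENNReal.ofReal (riskReal δ θ) := by
  rw [risk, riskReal, KLoss_eq_ofReal hδ.1, KLoss_eq_ofReal hδ.2,
    ← ENNReal.ofReal_mul (sub_nonneg.2 hθ.2), ← ENNReal.ofReal_mul hθ.1,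
    ← ENNReal.ofReal_add (mul_nonneg (sub_nonneg.2 hθ.2) (binaryKL_nonneg hθ hδ.1))
      (mul_nonneg hθ.1 (binaryKL_nonneg hθ hδ.2))]

lemma risk_le_risk_iff {δ δ' : ℝ × ℝ} (hδ : δ ∈ Ioo (0 : ℝ) 1 ×ˢ Ioo (0 : ℝ) 1)
    (hδ' : δ' ∈ Ioo (0 : ℝ) 1 ×ˢ Ioo (0 : ℝ) 1) {θ : ℝ} (hθ : θ ∈ Icc (0 : ℝ) 1) :
    risk δ' θ ≤ risk δ θ ↔ riskReal δ' θ ≤ riskReal δ θ := by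
  rw [risk_eq_ofReal hδ hθ, risk_eq_ofReal hδ' hθ,
    ENNReal.ofReal_le_ofReal_iff (riskReal_nonneg hδ hθ)]

lemma risk_lt_top_iff {δ : ℝ × ℝ} (hδ : δ ∈ Decisions) {θ : ℝ} (hθ : θ ∈ Ioo (0 : ℝ) 1) :
    risk δ θ < ⊤ ↔ δ ∈ Ioo (0 : ℝ) 1 ×ˢ Ioo (0 : ℝ) 1 := by
  refine ⟨fun h => ?_, fun h => risk_eq_ofReal h (Ioo_subset_Icc_self hθ) ▸ ENNReal.ofReal_lt_top⟩
  have hθ₀ : ENNReal.ofReal θ ≠ 0 := by simpa using hθ.1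
  have hθ₁ : ENNReal.ofReal (1 - θ) ≠ 0 := by simpa using hθ.2
  by_contra hout
  rcases not_and_or.1 hout with hout | hout
  · have := KLoss_eq_top hθ ((eq_endpoints_or_mem_Ioo_of_mem_Icc hδ.1).imp_right
      (·.resolve_right hout))
    simp [risk, this, ENNReal.mul_top hθ₁] at h
  · have := KLoss_eq_top hθ ((eq_endpoints_or_mem_Ioo_of_mem_Icc hδ.2).imp_right
      (·.resolve_right hout))
    simp [risk, this, ENNReal.mul_top hθ₀] at h

lemma risk_eq_zero_iff {δ : ℝ × ℝ} (hδ : δ ∈ Decisions) {θ : ℝ} (hθ : θ ∈ Ioo (0 : ℝ) 1) :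
    risk δ θ = 0 ↔ δ = (θ, θ) := by
  have hθ₀ : ENNReal.ofReal θ ≠ 0 := by simpa using hθ.1
  have hθ₁ : ENNReal.ofReal (1 - θ) ≠ 0 := by simpa using hθ.2
  rw [risk, add_eq_zero, mul_eq_zero_iff_left hθ₁, mul_eq_zero_iff_left hθ₀,
    KLoss_eq_zero_iff (Ioo_subset_Icc_self hθ) hδ.1,
    KLoss_eq_zero_iff (Ioo_subset_Icc_self hθ) hδ.2, Prod.ext_iff]

lemma admissible_zero_one : Admissible (0, 1) := by
  refine admissible_of_forall_risk_le_imp_eq fun δ hδ hle => ?_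
  have h₀ : KLoss 0 δ.1 ≤ KLoss 0 0 := by simpa only [risk_zero] using hle 0 (by simp)
  have h₁ : KLoss 1 δ.2 ≤ KLoss 1 1 := by simpa only [risk_one] using hle 1 (by simp)
  rw [(KLoss_eq_zero_iff (by simp) (by simp)).2 rfl, nonpos_iff_eq_zero,
    KLoss_eq_zero_iff (by simp) hδ.1] at h₀
  rw [(KLoss_eq_zero_iff (by simp) (by simp)).2 rfl, nonpos_iff_eq_zero,
    KLoss_eq_zero_iff (by simp) hδ.2] at h₁
  exact Prod.ext h₀ h₁

lemma admissible_diag {m : ℝ} (hm : m ∈ Ioo (0 : ℝ) 1) : Admissible (m, m) := by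
  refine admissible_of_forall_risk_le_imp_eq fun δ hδ hle => ?_
  have h := hle m (Ioo_subset_Icc_self hm)
  rwa [(risk_eq_zero_iff (prod_mono Ioo_subset_Icc_self Ioo_subset_Icc_self ⟨hm, hm⟩) hm).2 rfl,
    nonpos_iff_eq_zero, risk_eq_zero_iff hδ hm] at h

/-- Bayes risk decomposition for the prior with masses `(1 - y) * (y - x)` at `0` and `x` at `y`,
whose Bayes rule (the pair of posterior means) is `(x, y)`. -/
lemma bayesRisk_sub_eq {x y : ℝ} {δ : ℝ × ℝ} (hxy : (x, y) ∈ Ioo (0 : ℝ) 1 ×ˢ Ioo (0 : ℝ) 1)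
    (hδ : δ ∈ Ioo (0 : ℝ) 1 ×ˢ Ioo (0 : ℝ) 1) :
    (1 - y) * (y - x) * (riskReal δ 0 - riskReal (x, y) 0) + x * (riskReal δ y - riskReal (x, y) y)
      = y * (1 - y) * binaryKL x δ.1 + x * y * binaryKL y δ.2 := by
  simp only [riskReal, binaryKL_eq hxy.1, binaryKL_eq hxy.2, binaryKL_eq hδ.1, binaryKL_eq hδ.2,
    sub_zero, log_one, log_zero]
  ring

lemma admissible_of_lt {x y : ℝ} (hx : 0 < x) (hxy : x < y) (hy : y < 1) : Admissible (x, y) := by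
  have hxy₀ : (x, y) ∈ Ioo (0 : ℝ) 1 ×ˢ Ioo (0 : ℝ) 1 := ⟨⟨hx, hxy.trans hy⟩, hx.trans hxy, hy⟩
  refine admissible_of_forall_risk_le_imp_eq fun δ hδ hle => ?_
  have hyθ : y ∈ Ioo (0 : ℝ) 1 := hxy₀.2
  have hδ₀ : δ ∈ Ioo (0 : ℝ) 1 ×ˢ Ioo (0 : ℝ) 1 := (risk_lt_top_iff hδ hyθ).1
    ((hle y (Ioo_subset_Icc_self hyθ)).trans_lt ((risk_lt_top_iff
      (prod_mono Ioo_subset_Icc_self Ioo_subset_Icc_self hxy₀) hyθ).2 hxy₀))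
  have h₀ := (risk_le_risk_iff hxy₀ hδ₀ (by simp)).1 (hle 0 (by simp))
  have h₁ := (risk_le_risk_iff hxy₀ hδ₀ (Ioo_subset_Icc_self hyθ)).1
    (hle y (Ioo_subset_Icc_self hyθ))
  have hy₀ : 0 < y := hyθ.1
  have hy₁ : 0 < 1 - y := sub_pos.2 hy
  have hKL₁ := mul_nonneg (mul_pos hy₀ hy₁).le
    (binaryKL_nonneg (Ioo_subset_Icc_self hxy₀.1) hδ₀.1)
  have hKL₂ := mul_nonneg (mul_pos hx hy₀).le (binaryKL_nonneg (Ioo_subset_Icc_self hyθ) hδ₀.2)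
  have hbayes : y * (1 - y) * binaryKL x δ.1 + x * y * binaryKL y δ.2 ≤ 0 :=
    bayesRisk_sub_eq hxy₀ hδ₀ ▸ add_nonpos
      (mul_nonpos_of_nonneg_of_nonpos (mul_pos hy₁ (sub_pos.2 hxy)).le (sub_nonpos.2 h₀))
      (mul_nonpos_of_nonneg_of_nonpos hx.le (sub_nonpos.2 h₁))
  obtain ⟨hfst, hsnd⟩ :=
    (add_eq_zero_iff_of_nonneg hKL₁ hKL₂).1 (hbayes.antisymm (add_nonneg hKL₁ hKL₂))
  rw [mul_eq_zero_iff_left (mul_pos hy₀ hy₁).ne',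
    binaryKL_eq_zero_iff (Ioo_subset_Icc_self hxy₀.1) hδ₀.1] at hfst
  rw [mul_eq_zero_iff_left (mul_pos hx hy₀).ne',
    binaryKL_eq_zero_iff (Ioo_subset_Icc_self hyθ) hδ₀.2] at hsnd
  exact Prod.ext hfst hsnd

lemma admissible_of_mem_classA {δ : ℝ × ℝ} (hδ : δ ∈ classA) : Admissible δ := by
  rcases hδ with (⟨h₀, hlt, h₁⟩ | ⟨h₀, heq, h₁⟩) | rfl
  · exact admissible_of_lt h₀ hlt h₁
  · obtain ⟨x, y⟩ := δ
    obtain rfl : x = y := heq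
    exact admissible_diag ⟨h₀, h₁⟩
  · exact admissible_zero_one

lemma dominates_zero_one {δ : ℝ × ℝ} (hδ : δ ∈ Decisions)
    (hbd : δ ∉ Ioo (0 : ℝ) 1 ×ˢ Ioo (0 : ℝ) 1) (hne : δ ≠ (0, 1)) : Dominates (0, 1) δ := by
  have hrisk₀ : risk (0, 1) 0 = 0 := by rw [risk_zero, KLoss_eq_zero_iff (by simp) (by simp)]
  have hrisk₁ : risk (0, 1) 1 = 0 := by rw [risk_one, KLoss_eq_zero_iff (by simp) (by simp)]
  refine ⟨fun θ hθ => ?_, ?_⟩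
  · rcases eq_endpoints_or_mem_Ioo_of_mem_Icc hθ with rfl | rfl | hθ
    · exact hrisk₀ ▸ zero_le
    · exact hrisk₁ ▸ zero_le
    · rw [not_lt_top_iff.1 (mt (risk_lt_top_iff hδ hθ).1 hbd)]
      exact le_top
  · by_cases h₀ : δ.1 = 0
    · refine ⟨1, by simp, ?_⟩
      rw [hrisk₁, pos_iff_ne_zero, risk_one, Ne, KLoss_eq_zero_iff (by simp) hδ.2]
      exact fun h₁ => hne (Prod.ext h₀ h₁)
    · refine ⟨0, by simp, ?_⟩
      rw [hrisk₀, pos_iff_ne_zero, risk_zero, Ne, KLoss_eq_zero_iff (by simp) hδ.1]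
      exact h₀

lemma sub_le_mul_log_sub_log {w z : ℝ} (hw : 0 < w) (hz : 0 < z) : w - z ≤ w * (log w - log z) := by
  have h := one_sub_inv_le_log_of_pos (div_pos hw hz)
  rw [inv_div, log_div hw.ne' hz.ne'] at h
  calc w - z = w * (1 - z / w) := by field_simp
    _ ≤ w * (log w - log z) := mul_le_mul_of_nonneg_left h hw.le

lemma mem_Ioo_of_mul_one_add_sub_eq {x y m : ℝ} (hy : 0 < y) (hyx : y < x) (hx : x < 1)
    (hm : m * (1 + x - y) = x) : m ∈ Ioo (0 : ℝ) 1 :=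
  ⟨by nlinarith, by nlinarith⟩

/-- Bounding each logarithm by its tangent line at `m` leaves `(x - y) * (θ - m) ^ 2`;
the value `m = x / (1 + x - y)` is the one that makes this bound a perfect square. -/
lemma mul_sq_le_riskReal_sub_riskReal_diag {x y m θ : ℝ} (hy : 0 < y) (hyx : y < x) (hx : x < 1)
    (hm : m * (1 + x - y) = x) (hθ : θ ∈ Icc (0 : ℝ) 1) :
    (x - y) * (θ - m) ^ 2 ≤ m * (1 - m) * (riskReal (x, y) θ - riskReal (m, m) θ) := by
  have hm₀ := mem_Ioo_of_mul_one_add_sub_eq hy hyx hx hm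
  have hx₀ : 0 < x := hy.trans hyx
  have hy₁ : y < 1 := hyx.trans hx
  simp only [riskReal, binaryKL_eq hm₀, binaryKL_eq ⟨hx₀, hx⟩, binaryKL_eq ⟨hy, hy₁⟩]
  have h₁ := mul_le_mul_of_nonneg_left (sub_le_mul_log_sub_log hm₀.1 hx₀)
    (mul_nonneg (mul_nonneg hθ.1 (sub_nonneg.2 hθ.2)) (sub_pos.2 hm₀.2).le)
  have h₂ := mul_le_mul_of_nonneg_left (sub_le_mul_log_sub_log hm₀.1 hy)
    (mul_nonneg (mul_nonneg hθ.1 hθ.1) (sub_pos.2 hm₀.2).le)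
  have h₃ := mul_le_mul_of_nonneg_left (sub_le_mul_log_sub_log (sub_pos.2 hm₀.2) (sub_pos.2 hx))
    (mul_nonneg (mul_nonneg (sub_nonneg.2 hθ.2) (sub_nonneg.2 hθ.2)) hm₀.1.le)
  have h₄ := mul_le_mul_of_nonneg_left (sub_le_mul_log_sub_log (sub_pos.2 hm₀.2) (sub_pos.2 hy₁))
    (mul_nonneg (mul_nonneg hθ.1 (sub_nonneg.2 hθ.2)) hm₀.1.le)
  have hsq : θ * (1 - θ) * (1 - m) * (m - x) + θ * θ * (1 - m) * (m - y)
      + (1 - θ) * (1 - θ) * m * ((1 - m) - (1 - x)) + θ * (1 - θ) * m * ((1 - m) - (1 - y))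
      = (x - y) * (θ - m) ^ 2 := by
    linear_combination (θ - m) * hm
  linarith

lemma dominates_of_lt {x y m : ℝ} (hy : 0 < y) (hyx : y < x) (hx : x < 1)
    (hm : m * (1 + x - y) = x) : Dominates (m, m) (x, y) := by
  have hm₀ := mem_Ioo_of_mul_one_add_sub_eq hy hyx hx hm
  have hmm : (m, m) ∈ Ioo (0 : ℝ) 1 ×ˢ Ioo (0 : ℝ) 1 := ⟨hm₀, hm₀⟩
  have hxy : (x, y) ∈ Ioo (0 : ℝ) 1 ×ˢ Ioo (0 : ℝ) 1 := ⟨⟨hy.trans hyx, hx⟩, hy, hyx.trans hx⟩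
  have hvar : 0 < m * (1 - m) := mul_pos hm₀.1 (sub_pos.2 hm₀.2)
  refine ⟨fun θ hθ => (risk_le_risk_iff hxy hmm hθ).2 (sub_nonneg.1 ?_), 0, by simp, ?_⟩
  · exact (mul_nonneg_iff_of_pos_left hvar).1 ((mul_nonneg (sub_pos.2 hyx).le (sq_nonneg _)).trans
      (mul_sq_le_riskReal_sub_riskReal_diag hy hyx hx hm hθ))
  · have hgap := (mul_pos_iff_of_pos_left hvar).1 ((mul_pos (sub_pos.2 hyx) (by nlinarith)).trans_le
      (mul_sq_le_riskReal_sub_riskReal_diag hy hyx hx hm (left_mem_Icc.2 zero_le_one)))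
    rw [risk_eq_ofReal hmm (by simp), risk_eq_ofReal hxy (by simp),
      ENNReal.ofReal_lt_ofReal_iff (riskReal_nonneg hmm (by simp) |>.trans_lt (sub_pos.1 hgap))]
    exact sub_pos.1 hgap

lemma classA_subset_decisions : classA ⊆ Decisions := by
  rintro ⟨x, y⟩ ((⟨h₀, hxy, h₁⟩ | ⟨h₀, hxy, h₁⟩) | h)
  · exact ⟨⟨h₀.le, by dsimp at *; linarith⟩, ⟨by dsimp at *; linarith, h₁.le⟩⟩
  · exact ⟨⟨h₀.le, by dsimp at *; linarith⟩, ⟨by dsimp at *; linarith, h₁.le⟩⟩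
  · rw [mem_singleton_iff.1 h]
    exact ⟨left_mem_Icc.2 zero_le_one, right_mem_Icc.2 zero_le_one⟩

lemma completeClass_classA : CompleteClass classA := by
  refine ⟨classA_subset_decisions, fun δ ⟨hδ, hδA⟩ => ?_⟩
  by_cases hint : δ ∈ Ioo (0 : ℝ) 1 ×ˢ Ioo (0 : ℝ) 1
  · obtain ⟨x, y⟩ := δ
    obtain ⟨⟨hx₀, hx₁⟩, hy₀, hy₁⟩ := hint
    have hyx : y < x := by
      by_contra! hxy
      exact hδA (hxy.lt_or_eq.elim (fun h => Or.inl (Or.inl ⟨hx₀, h, hy₁⟩))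
        (fun h => Or.inl (Or.inr ⟨hx₀, h, hy₁⟩)))
    have hm : x / (1 + x - y) * (1 + x - y) = x := div_mul_cancel₀ _ (by linarith)
    have hm₀ := mem_Ioo_of_mul_one_add_sub_eq hy₀ hyx hx₁ hm
    exact ⟨_, Or.inl (Or.inr ⟨hm₀.1, rfl, hm₀.2⟩), dominates_of_lt hy₀ hyx hx₁ hm⟩
  · exact ⟨(0, 1), Or.inr rfl, dominates_zero_one hδ hint fun h => hδA (h ▸ Or.inr rfl)⟩

/-- `𝒜` is exactly the class of admissible decisions, it is a complete class, and
no proper subclass of it is complete: `𝒜` is the minimal complete class. -/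
theorem minimal_complete_class :
    (∀ δ ∈ Decisions, Admissible δ ↔ δ ∈ classA) ∧
    CompleteClass classA ∧
    (∀ C : Set (ℝ × ℝ), C ⊂ classA → ¬ CompleteClass C) :=
  ⟨fun _ hδ => ⟨completeClass_classA.mem_of_admissible hδ, admissible_of_mem_classA⟩,
    completeClass_classA,
    fun _ => not_completeClass_of_ssubset classA_subset_decisions
      fun _ => admissible_of_mem_classA⟩
end

section
/- The decision (δ₀,δ₁) = (1/5, 4/5) is the unique minimax decision: sup_{θ ∈ [0,1]} R_{(1/5,4/5)}(θ) = log(5/4), and for every decision (δ₀,δ₁) ∈ [0,1]² with (δ₀,δ₁) ≠ (1/5, 4/5) one has sup_{θ ∈ [0,1]} R_{(δ₀,δ₁)}(θ) > log(5/4). -/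
/-!
Expanding the losses, the risk of `(1/5, 4/5)` is `log (5/4) - (h θ - 4 θ (1 - θ) log 2)`,
where `h` is the binary entropy. The bound `4 θ (1 - θ) log 2 ≤ h θ` (fifth-order Taylor bounds
near `θ = 1/2`, `log x ≤ x - 1` near the endpoints) gives the worst-case risk, attained at
`θ = 0, 1/2, 1`. Any other decision loses at one of these points: at `θ = 0` if `δ₀ > 1/5`, at
`θ = 1` if `δ₁ < 4/5`, and otherwise at `θ = 1/2`, where the risk is
`-log 2 - log (δ₀ (1 - δ₀) δ₁ (1 - δ₁)) / 4` and `x (1 - x) ≤ 4/25` off `(1/5, 4/5)`.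
-/

open scoped ENNReal

open Real InformationTheory

lemma mul_log_one_add_add_mul_log_one_sub_le {t : ℝ} (ht₀ : 0 ≤ t) (ht : t ≤ 1 / 2) :
    (1 + t) * log (1 + t) + (1 - t) * log (1 - t) ≤ 2 * log 2 * t ^ 2 := by
  -- the left side is `t ^ 2 + t ^ 4 / 6 + ⋯` and `2 * log 2 > 1.38`: fifth order suffices
  have hlog2 := log_two_gt_d9
  have ht_abs : |t| < 1 := by rw [abs_of_nonneg ht₀]; linarith
  have hA := abs_log_sub_add_sum_range_le ht_abs 5
  have hB := abs_log_sub_add_sum_range_le (x := -t) (by rwa [abs_neg]) 5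
  simp only [Finset.sum_range_succ, Finset.sum_range_zero, abs_neg, abs_of_nonneg ht₀] at hA hB
  have hrem : t ^ 6 / (1 - t) ≤ 2 * t ^ 6 := by
    rw [div_le_iff₀ (by linarith)]
    nlinarith [pow_nonneg ht₀ 6]
  have hsub : log (1 - t) ≤ -(t + t ^ 2 / 2 + t ^ 3 / 3 + t ^ 4 / 4 + t ^ 5 / 5) + 2 * t ^ 6 := by
    norm_num at hA; linarith [(abs_le.mp hA).2]
  have hadd : log (1 + t) ≤ t - t ^ 2 / 2 + t ^ 3 / 3 - t ^ 4 / 4 + t ^ 5 / 5 + 2 * t ^ 6 := by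
    norm_num at hB; linarith [(abs_le.mp hB).2]
  nlinarith [mul_le_mul_of_nonneg_left hadd (by linarith : 0 ≤ 1 + t),
    mul_le_mul_of_nonneg_left hsub (by linarith : 0 ≤ 1 - t), pow_nonneg ht₀ 3,
    pow_nonneg ht₀ 4, pow_nonneg ht₀ 5, pow_nonneg ht₀ 6, pow_nonneg ht₀ 7]

lemma four_mul_mul_log_two_le_binEntropy_of_le_quarter {p : ℝ} (hp₀ : 0 < p)
    (hp : p ≤ 1 / 4) :
    4 * p * (1 - p) * log 2 ≤ binEntropy p := by
  have hlog2 := log_two_lt_d9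
  have h4p : log (4 * p) ≤ 4 * p - 1 := log_le_sub_one_of_pos (by linarith)
  have hlog_p : log p = log (4 * p) - 2 * log 2 := by
    rw [log_mul (by norm_num) hp₀.ne', log_four_eq]; ring
  have hlog_one_sub : log (1 - p) ≤ -p := by
    linarith [log_le_sub_one_of_pos (by linarith : 0 < 1 - p)]
  rw [binEntropy, log_inv, log_inv, hlog_p]
  nlinarith [mul_le_mul_of_nonneg_left h4p hp₀.le,
    mul_le_mul_of_nonneg_left hlog_one_sub (by linarith : 0 ≤ 1 - p),
    mul_nonneg (mul_nonneg hp₀.le (by linarith : 0 ≤ 1 / 4 - p))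
      (by linarith : 0 ≤ 5 - 4 * log 2),
    mul_nonneg hp₀.le (by linarith : 0 ≤ 3 - 4 * log 2)]

lemma four_mul_mul_log_two_le_binEntropy {p : ℝ} (hp : p ∈ Set.Icc 0 1) :
    4 * p * (1 - p) * log 2 ≤ binEntropy p := by
  wlog hp_half : p ≤ 1 / 2 generalizing p
  · simpa [mul_comm, mul_left_comm] using
      this (p := 1 - p) ⟨by linarith [hp.2], by linarith [hp.1]⟩ (by linarith)
  rcases hp.1.eq_or_lt with rfl | hp₀
  · simp
  rcases le_or_gt p (1 / 4) with hp_quarter | hp_quarter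
  · exact four_mul_mul_log_two_le_binEntropy_of_le_quarter hp₀ hp_quarter
  have h := mul_log_one_add_add_mul_log_one_sub_le (t := 1 - 2 * p) (by linarith) (by linarith)
  rw [show 1 + (1 - 2 * p) = 2 * (1 - p) by ring, show 1 - (1 - 2 * p) = 2 * p by ring,
    log_mul two_ne_zero (by linarith), log_mul two_ne_zero hp₀.ne'] at h
  rw [binEntropy, log_inv, log_inv]
  nlinarith

noncomputable def bernoulliKL (θ d : ℝ) : ℝ :=
  θ * log (θ / d) + (1 - θ) * log ((1 - θ) / (1 - d))

lemma KLoss_of_mem_Ioo (θ : ℝ) {d : ℝ} (hd : d ∈ Set.Ioo 0 1) :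
    KLoss θ d = ENNReal.ofReal (bernoulliKL θ d) := by
  rw [KLoss, if_neg (by rintro (⟨-, h⟩ | ⟨-, h⟩) <;> linarith [hd.1, hd.2])]
  rfl

lemma mul_log_div_of_ne_zero (x : ℝ) {y : ℝ} (hy : y ≠ 0) :
    x * log (x / y) = x * log x - x * log y := by
  rcases eq_or_ne x 0 with rfl | hx
  · simp
  · rw [log_div hx hy, mul_sub]

lemma bernoulliKL_eq (θ : ℝ) {d : ℝ} (hd : d ∈ Set.Ioo 0 1) :
    bernoulliKL θ d = -binEntropy θ - θ * log d - (1 - θ) * log (1 - d) := by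
  rw [bernoulliKL, mul_log_div_of_ne_zero _ hd.1.ne', mul_log_div_of_ne_zero _ (by linarith [hd.2]),
    binEntropy, log_inv, log_inv]
  ring

lemma bernoulliKL_eq_klFun {θ d : ℝ} (hd : d ∈ Set.Ioo 0 1) :
    bernoulliKL θ d = d * klFun (θ / d) + (1 - d) * klFun ((1 - θ) / (1 - d)) := by
  have hd₀ : d ≠ 0 := hd.1.ne'
  have hd₁ : 1 - d ≠ 0 := by linarith [hd.2]
  simp only [klFun, bernoulliKL]
  field_simp
  ring

lemma bernoulliKL_nonneg {θ d : ℝ} (hθ : θ ∈ Set.Icc 0 1) (hd : d ∈ Set.Ioo 0 1) :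
    0 ≤ bernoulliKL θ d := by
  obtain ⟨hθ₀, hθ₁⟩ := hθ
  obtain ⟨hd₀, hd₁⟩ := hd
  rw [bernoulliKL_eq_klFun ⟨hd₀, hd₁⟩]
  exact add_nonneg (mul_nonneg hd₀.le (klFun_nonneg (div_nonneg hθ₀ hd₀.le)))
    (mul_nonneg (by linarith) (klFun_nonneg (div_nonneg (by linarith) (by linarith))))

lemma risk_of_mem_Ioo {δ : ℝ × ℝ} (h₁ : δ.1 ∈ Set.Ioo 0 1) (h₂ : δ.2 ∈ Set.Ioo 0 1)
    {θ : ℝ} (hθ : θ ∈ Set.Icc 0 1) :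
    risk δ θ = ENNReal.ofReal ((1 - θ) * bernoulliKL θ δ.1 + θ * bernoulliKL θ δ.2) := by
  have hθ₁ : 0 ≤ 1 - θ := by linarith [hθ.2]
  rw [risk, KLoss_of_mem_Ioo θ h₁, KLoss_of_mem_Ioo θ h₂, ← ENNReal.ofReal_mul hθ₁,
    ← ENNReal.ofReal_mul hθ.1,
    ← ENNReal.ofReal_add (mul_nonneg hθ₁ (bernoulliKL_nonneg hθ h₁))
      (mul_nonneg hθ.1 (bernoulliKL_nonneg hθ h₂))]

lemma risk_minimax_eq {θ : ℝ} (hθ : θ ∈ Set.Icc 0 1) :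
    risk (1 / 5, 4 / 5) θ =
      ENNReal.ofReal (log (5 / 4) - (binEntropy θ - 4 * θ * (1 - θ) * log 2)) := by
  have h₁ : (1 / 5 : ℝ) ∈ Set.Ioo 0 1 := by norm_num
  have h₂ : (4 / 5 : ℝ) ∈ Set.Ioo 0 1 := by norm_num
  rw [risk_of_mem_Ioo h₁ h₂ hθ, bernoulliKL_eq θ h₁, bernoulliKL_eq θ h₂]
  norm_num [log_div, log_four_eq]
  ring_nf

lemma risk_minimax_le {θ : ℝ} (hθ : θ ∈ Set.Icc 0 1) :
    risk (1 / 5, 4 / 5) θ ≤ ENNReal.ofReal (log (5 / 4)) := by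
  rw [risk_minimax_eq hθ]
  exact ENNReal.ofReal_le_ofReal (by linarith [four_mul_mul_log_two_le_binEntropy hθ])

lemma risk_minimax_zero : risk (1 / 5, 4 / 5) 0 = ENNReal.ofReal (log (5 / 4)) := by
  rw [risk_minimax_eq (by norm_num)]
  simp

lemma KLoss_one_sub (θ d : ℝ) : KLoss (1 - θ) (1 - d) = KLoss θ d := by
  have hcond : ((1 - θ ≠ 0 ∧ 1 - d = 0) ∨ (1 - θ ≠ 1 ∧ 1 - d = 1)) ↔
      ((θ ≠ 0 ∧ d = 0) ∨ (θ ≠ 1 ∧ d = 1)) := by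
    grind
  unfold KLoss
  rw [if_congr hcond rfl (by simp only [sub_sub_cancel]; rw [add_comm])]

lemma risk_one_sub (p q θ : ℝ) : risk (1 - q, 1 - p) (1 - θ) = risk (p, q) θ := by
  simp only [risk, KLoss_one_sub, sub_sub_cancel]
  exact add_comm _ _

lemma ofReal_log_five_fourths_lt_risk_zero {p : ℝ} (hp : p ∈ Set.Ioc (1 / 5) 1) (q : ℝ) :
    ENNReal.ofReal (log (5 / 4)) < risk (p, q) 0 := by
  rcases hp.2.eq_or_lt with rfl | hp₁
  · simp [risk, KLoss]
  rw [show risk (p, q) 0 = KLoss 0 p by simp [risk],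
    KLoss_of_mem_Ioo 0 ⟨by linarith [hp.1], hp₁⟩]
  refine (ENNReal.ofReal_lt_ofReal_iff_of_nonneg (log_nonneg (by norm_num))).2 ?_
  simp only [bernoulliKL, sub_zero, zero_mul, zero_add, one_mul]
  exact log_lt_log (by norm_num) (by rw [lt_div_iff₀ (by linarith)]; linarith [hp.1])

lemma risk_half_eq_top {p q : ℝ} (h : p = 0 ∨ q = 1) : risk (p, q) (1 / 2) = ⊤ := by
  have hhalf : ENNReal.ofReal (1 / 2) ≠ 0 := by norm_num
  rw [risk, show (1 : ℝ) - 1 / 2 = 1 / 2 by norm_num]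
  rcases h with rfl | rfl
  · rw [show KLoss (1 / 2) 0 = ⊤ by simp [KLoss], ENNReal.mul_top hhalf, top_add]
  · rw [show KLoss (1 / 2) 1 = ⊤ by simp [KLoss], ENNReal.mul_top hhalf, add_top]

lemma ofReal_log_five_fourths_lt_risk_half {p q : ℝ} (hp : p ∈ Set.Icc 0 (1 / 5))
    (hq : q ∈ Set.Icc (4 / 5) 1) (hne : (p, q) ≠ (1 / 5, 4 / 5)) :
    ENNReal.ofReal (log (5 / 4)) < risk (p, q) (1 / 2) := by
  obtain ⟨hp₀, hp_le⟩ := hp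
  obtain ⟨hq_ge, hq₁⟩ := hq
  rcases hp₀.eq_or_lt with rfl | hp_pos
  · rw [risk_half_eq_top (Or.inl rfl)]
    exact ENNReal.ofReal_lt_top
  rcases hq₁.eq_or_lt with rfl | hq_lt
  · rw [risk_half_eq_top (Or.inr rfl)]
    exact ENNReal.ofReal_lt_top
  -- `x (1 - x) ≤ 4 / 25` exactly when `x ∉ (1/5, 4/5)`
  have hprod : p * (1 - p) * (q * (1 - q)) < (4 / 25) ^ 2 := by
    have hp' : p * (1 - p) ≤ 4 / 25 := by nlinarith
    have hq' : q * (1 - q) ≤ 4 / 25 := by nlinarith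
    rcases hp_le.lt_or_eq with hp_lt | rfl
    · have hp_lt' : p * (1 - p) < 4 / 25 := by nlinarith
      nlinarith [mul_pos hp_pos (by linarith : 0 < 1 - p)]
    · have hq_gt : 4 / 5 < q := lt_of_le_of_ne hq_ge fun h => hne (by rw [← h])
      have hq_lt' : q * (1 - q) < 4 / 25 := by nlinarith
      nlinarith
  have hlog : log p + log (1 - p) + (log q + log (1 - q)) < 2 * log (4 / 25) := by
    rw [← log_mul hp_pos.ne' (by linarith), ← log_mul (by linarith) (by linarith),
      ← log_mul (mul_pos hp_pos (by linarith)).ne' (mul_pos (by linarith) (by linarith)).ne']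
    calc log (p * (1 - p) * (q * (1 - q))) < log ((4 / 25) ^ 2) :=
          log_lt_log (mul_pos (mul_pos hp_pos (by linarith)) (mul_pos (by linarith) (by linarith)))
            hprod
      _ = 2 * log (4 / 25) := by rw [log_pow]; norm_num
  rw [risk_of_mem_Ioo ⟨hp_pos, by linarith⟩ ⟨by linarith, hq_lt⟩ (by norm_num),
    bernoulliKL_eq _ ⟨hp_pos, by linarith⟩, bernoulliKL_eq _ ⟨by linarith, hq_lt⟩, one_div,
    binEntropy_two_inv]
  refine (ENNReal.ofReal_lt_ofReal_iff_of_nonneg (log_nonneg (by norm_num))).2 ?_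
  rw [log_div (by norm_num) (by norm_num), log_four_eq] at hlog ⊢
  rw [show (25 : ℝ) = 5 ^ 2 by norm_num, log_pow] at hlog
  push_cast at hlog
  linarith

lemma exists_ofReal_log_five_fourths_lt_risk {p q : ℝ} (hp : p ∈ Set.Icc 0 1)
    (hq : q ∈ Set.Icc 0 1) (hne : (p, q) ≠ (1 / 5, 4 / 5)) :
    ∃ θ ∈ Set.Icc (0 : ℝ) 1, ENNReal.ofReal (log (5 / 4)) < risk (p, q) θ := by
  rcases lt_or_ge (1 / 5) p with hp_gt | hp_le
  · exact ⟨0, by norm_num, ofReal_log_five_fourths_lt_risk_zero ⟨hp_gt, hp.2⟩ q⟩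
  rcases lt_or_ge q (4 / 5) with hq_lt | hq_ge
  · refine ⟨1, by norm_num, ?_⟩
    rw [← risk_one_sub, sub_self]
    exact ofReal_log_five_fourths_lt_risk_zero ⟨by linarith, by linarith [hq.1]⟩ _
  · exact ⟨1 / 2, by norm_num,
      ofReal_log_five_fourths_lt_risk_half ⟨hp.1, hp_le⟩ ⟨hq_ge, hq.2⟩ hne⟩

/-- The decision `(1/5, 4/5)` is the unique minimax decision: its worst-case risk equals
`log(5/4)`, and every other decision in `[0,1]²` has strictly larger worst-case risk
(the supremum being taken in the extended reals). -/
theorem minimax_decision :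
    (⨆ θ ∈ Set.Icc (0 : ℝ) 1, risk (1 / 5, 4 / 5) θ) =
      ENNReal.ofReal (Real.log (5 / 4)) ∧
    ∀ δ : ℝ × ℝ, δ.1 ∈ Set.Icc (0 : ℝ) 1 → δ.2 ∈ Set.Icc (0 : ℝ) 1 →
      δ ≠ (1 / 5, 4 / 5) →
      ENNReal.ofReal (Real.log (5 / 4)) < ⨆ θ ∈ Set.Icc (0 : ℝ) 1, risk δ θ := by
  refine ⟨le_antisymm (iSup₂_le fun θ hθ => risk_minimax_le hθ) ?_, ?_⟩
  · exact risk_minimax_zero ▸ le_biSup _ (by norm_num : (0 : ℝ) ∈ Set.Icc (0 : ℝ) 1)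
  · rintro ⟨p, q⟩ hp hq hne
    obtain ⟨θ, hθ, hlt⟩ := exists_ofReal_log_five_fourths_lt_risk hp hq hne
    exact hlt.trans_le (le_biSup _ hθ)
end
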